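/- Let θ be a ternary relation on ℕ, X ⊆ ℕ a finite set, n, s, k₁, …, k_s ∈ ℕ and a ≤ min X. If X is ω^{n+1}·(a, a·k₁, …, a·k_s)-large*(θ) and exp-sparse, then for every coloring f : X → {0,…,a−1} there is an f-homogeneous ω^n·(k₁, …, k_s)-large*(θ) subset of X (f-homogeneous means f is constant on the subset). -/

import Mathlib

/-- The minimum of a finite set of naturals (`0` if empty). -/
noncomputable def minN (X : Finset ℕ) : ℕ := sInf (X : Set ℕ)

/-- The maximum of a finite set of naturals (`0` if empty). -/
def maxN (X : Finset ℕ) : ℕ := X.sup id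

/-- `E` lies entirely below `F`. -/
def SetBelow (E F : Finset ℕ) : Prop := ∀ x ∈ E, ∀ y ∈ F, x < y

/-- `E` and `F` are `θ`-apart: for every `x < max E` there is `y < min F`
with `θ x y z` for all `z < max F`. -/
def ThetaApart (θ : ℕ → ℕ → ℕ → Prop) (E F : Finset ℕ) : Prop :=
  ∀ x < maxN E, ∃ y < minN F, ∀ z < maxN F, θ x y z

/-- `L·k`: finite sets containing `k` pairwise `θ`-apart members `X₀ < ⋯ < X_{k-1}` of `L`. -/
def MulK (θ : ℕ → ℕ → ℕ → Prop) (L : Set (Finset ℕ)) (k : ℕ) : Set (Finset ℕ) :=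
  {F | ∃ X : Fin k → Finset ℕ, (∀ i, X i ∈ L) ∧ (∀ i, X i ⊆ F) ∧
    ∀ i j, i < j → SetBelow (X i) (X j) ∧ ThetaApart θ (X i) (X j)}

/-- `L·σ` for a finite sequence `σ`: `L·ε = L`, `L·(k⌢τ) = (L·k)·τ`. -/
def MulSeq (θ : ℕ → ℕ → ℕ → Prop) (L : Set (Finset ℕ)) : List ℕ → Set (Finset ℕ)
  | [] => L
  | k :: τ => MulSeq θ (MulK θ L k) τ

/-- `L^θ_n`: the `ω^n`-large*(θ) finite sets. -/
noncomputable def LargeStar (θ : ℕ → ℕ → ℕ → Prop) : ℕ → Set (Finset ℕ)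
  | 0 => {X | X.Nonempty}
  | n + 1 => {X | X.Nonempty ∧
      X.erase (minN X) ∈ MulSeq θ (LargeStar θ n) (List.replicate (n + 1) (minN X))}

/-- `ω^n`-largeness(θ) (the non-starred notion). -/
noncomputable def LargeTheta (θ : ℕ → ℕ → ℕ → Prop) : ℕ → Set (Finset ℕ)
  | 0 => {X | X.Nonempty}
  | n + 1 => {X | X.Nonempty ∧ X.erase (minN X) ∈ MulK θ (LargeTheta θ n) (minN X)}

/-- `L·k` without θ-apartness (plain largeness product). -/
def MulKPlain (L : Set (Finset ℕ)) (k : ℕ) : Set (Finset ℕ) :=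
  {F | ∃ X : Fin k → Finset ℕ, (∀ i, X i ∈ L) ∧ (∀ i, X i ⊆ F) ∧
    ∀ i j, i < j → SetBelow (X i) (X j)}

/-- Ketonen–Solovay `ω^n`-largeness (no θ). -/
noncomputable def LargePlain : ℕ → Set (Finset ℕ)
  | 0 => {X | X.Nonempty}
  | n + 1 => {X | X.Nonempty ∧ X.erase (minN X) ∈ MulKPlain (LargePlain n) (minN X)}

/-- `g`-sparsity. -/
def GSparse (g : ℕ → ℕ) (X : Finset ℕ) : Prop := ∀ x ∈ X, ∀ y ∈ X, x < y → g x < y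

/-- exp-sparsity. -/
def ExpSparse (X : Finset ℕ) : Prop := ∀ x ∈ X, ∀ y ∈ X, x < y → 4 ^ x < y

/-- `ω^k`-sparsity. -/
def OmegaSparse (k : ℕ) (X : Finset ℕ) : Prop :=
  ∀ x ∈ X, ∀ y ∈ X, x < y → Finset.Ioc x y ∈ LargePlain k

/-!
Induction on `n`, and for fixed `n` on the sequence `ks` from its right end. If the last entry is
`k`, the set splits into `a·k` apart blocks, each handled by the shorter sequence; by pigeonhole
`k` of the homogeneous sets obtained share a colour, and their union is the required set.

It remains to find a homogeneous `ω^n`-large* set in an `ω^{n+1}·a`-large* set with blocks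
`W₀ < ⋯ < W_{a-1}`. For `n + 1`: let `m = min W_{a-1}` and `b = max W_{a-2}`. Exp-sparseness gives
`a·b ≤ b² < 4^b < m`, so `W_{a-1} ∖ {m}` is `ω^{n+1}·(a, a·b, …, a·b)`-large*, and the case `n`
yields a homogeneous `ω^n·(b, …, b)`-large* `Y ⊆ W_{a-1} ∖ {m}` of some colour `c`. If `c` occurs at
some `q ≤ b` in an earlier block, then `{q} ∪ Y` is `ω^{n+1}`-large*; otherwise the earlier `a - 1`
blocks avoid `c` and we recurse on them with one colour fewer. A single block carries a single
colour and is handled by the same argument with `b = m`.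
-/

lemma minN_le {X : Finset ℕ} {x : ℕ} (hx : x ∈ X) : minN X ≤ x :=
  Nat.sInf_le (by simpa using hx)

lemma minN_mem {X : Finset ℕ} (hX : X.Nonempty) : minN X ∈ X := by
  simpa [minN] using Nat.sInf_mem (s := (X : Set ℕ)) (by simpa using hX)

lemma le_maxN {X : Finset ℕ} {x : ℕ} (hx : x ∈ X) : x ≤ maxN X :=
  Finset.le_sup (f := id) hx

lemma maxN_mem {X : Finset ℕ} (hX : X.Nonempty) : maxN X ∈ X := by
  obtain ⟨a, ha, he⟩ := Finset.exists_mem_eq_sup X hX id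
  rw [maxN, he]
  exact ha

lemma minN_mono {X Y : Finset ℕ} (h : Y ⊆ X) (hY : Y.Nonempty) : minN X ≤ minN Y :=
  minN_le (h (minN_mem hY))

lemma maxN_mono {X Y : Finset ℕ} (h : Y ⊆ X) : maxN Y ≤ maxN X :=
  Finset.sup_mono h

lemma nonempty_of_pos_minN {X : Finset ℕ} (h : 0 < minN X) : X.Nonempty := by
  rw [Finset.nonempty_iff_ne_empty]
  rintro rfl
  simp [minN] at h

lemma minN_lt_of_mem_erase {X : Finset ℕ} {y : ℕ} (hy : y ∈ X.erase (minN X)) : minN X < y :=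
  (minN_le (Finset.mem_of_mem_erase hy)).lt_of_ne (Finset.ne_of_mem_erase hy).symm

lemma minN_insert {q : ℕ} {Y : Finset ℕ} (h : ∀ y ∈ Y, q ≤ y) : minN (insert q Y) = q := by
  refine le_antisymm (minN_le (Finset.mem_insert_self _ _)) ?_
  rcases Finset.mem_insert.mp (minN_mem (Finset.insert_nonempty q Y)) with he | hmem
  · exact he.ge
  · exact h _ hmem

lemma SetBelow.mono {E F E' F' : Finset ℕ} (h : SetBelow E F) (hE : E' ⊆ E) (hF : F' ⊆ F) :
    SetBelow E' F' :=
  fun x hx y hy => h x (hE hx) y (hF hy)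

lemma ThetaApart.mono {θ : ℕ → ℕ → ℕ → Prop} {E F E' F' : Finset ℕ} (h : ThetaApart θ E F)
    (hE : E' ⊆ E) (hF : F' ⊆ F) (hF' : F'.Nonempty) : ThetaApart θ E' F' := by
  intro x hx
  obtain ⟨y, hy, hz⟩ := h x (hx.trans_le (maxN_mono hE))
  exact ⟨y, hy.trans_le (minN_mono hF hF'), fun z hz' => hz z (hz'.trans_le (maxN_mono hF))⟩

lemma ExpSparse.mono {X Y : Finset ℕ} (h : ExpSparse X) (hYX : Y ⊆ X) : ExpSparse Y :=
  fun x hx y hy hxy => h x (hYX hx) y (hYX hy) hxy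

lemma ExpSparse.mul_le {X : Finset ℕ} (h : ExpSparse X) {c b m : ℕ} (hb : b ∈ X) (hm : m ∈ X)
    (hbm : b < m) (hcb : c ≤ b) : c * b ≤ m :=
  calc c * b ≤ 2 ^ b * 2 ^ b := Nat.mul_le_mul (hcb.trans (Nat.lt_two_pow_self).le)
          (Nat.lt_two_pow_self).le
    _ = 4 ^ b := by rw [← mul_pow]; norm_num
    _ ≤ m := (h b hb m hm hbm).le

section Products

variable {θ : ℕ → ℕ → ℕ → Prop}

lemma mulK_mono_left {L L' : Set (Finset ℕ)} (h : L ⊆ L') (k : ℕ) : MulK θ L k ⊆ MulK θ L' k := by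
  rintro F ⟨Xs, hL, hF, hrel⟩
  exact ⟨Xs, fun i => h (hL i), hF, hrel⟩

lemma mulK_anti_right {k k' : ℕ} (h : k ≤ k') (L : Set (Finset ℕ)) :
    MulK θ L k' ⊆ MulK θ L k := by
  rintro F ⟨Xs, hL, hF, hrel⟩
  exact ⟨fun i => Xs (Fin.castLE h i), fun i => hL _, fun i => hF _, fun i j hij => hrel _ _ hij⟩

lemma mulSeq_mono_left {L L' : Set (Finset ℕ)} (h : L ⊆ L') :
    ∀ σ : List ℕ, MulSeq θ L σ ⊆ MulSeq θ L' σ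
  | [] => h
  | k :: τ => mulSeq_mono_left (mulK_mono_left h k) τ

lemma mulSeq_anti_right {σ τ : List ℕ} (h : List.Forall₂ (· ≤ ·) σ τ) (L : Set (Finset ℕ)) :
    MulSeq θ L τ ⊆ MulSeq θ L σ := by
  induction h generalizing L with
  | nil => exact subset_rfl
  | cons hab _ ih => exact (ih _).trans (mulSeq_mono_left (mulK_anti_right hab L) _)

lemma forall₂_replicate {a b : ℕ} (h : a ≤ b) (n : ℕ) :
    List.Forall₂ (· ≤ ·) (List.replicate n a) (List.replicate n b) := by
  induction n with
  | zero => exact .nil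
  | succ n ih => exact .cons h ih

lemma mulSeq_concat (L : Set (Finset ℕ)) (σ : List ℕ) (k : ℕ) :
    MulSeq θ L (σ ++ [k]) = MulK θ (MulSeq θ L σ) k := by
  induction σ generalizing L with
  | nil => rfl
  | cons k' σ ih => exact ih _

lemma nonempty_of_mem_largeStar {n : ℕ} {X : Finset ℕ} (h : X ∈ LargeStar θ n) : X.Nonempty := by
  cases n with
  | zero => exact h
  | succ n => exact h.1

lemma nonempty_of_mem_mulSeq {L : Set (Finset ℕ)} (hL : ∀ Z ∈ L, Z.Nonempty) {σ : List ℕ}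
    (hσ : ∀ k ∈ σ, 0 < k) {F : Finset ℕ} (hF : F ∈ MulSeq θ L σ) : F.Nonempty := by
  induction σ generalizing L with
  | nil => exact hL F hF
  | cons k τ ih =>
    refine ih ?_ (fun k' hk' => hσ k' (List.mem_cons_of_mem k hk')) hF
    rintro Z ⟨Xs, hXs, hZ, -⟩
    obtain ⟨x, hx⟩ := hL _ (hXs ⟨0, hσ k List.mem_cons_self⟩)
    exact ⟨x, hZ _ hx⟩

lemma nonempty_of_mem_mulSeq_largeStar {n : ℕ} {σ : List ℕ} (hσ : ∀ k ∈ σ, 0 < k)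
    {F : Finset ℕ} (hF : F ∈ MulSeq θ (LargeStar θ n) σ) : F.Nonempty :=
  nonempty_of_mem_mulSeq (fun _ => nonempty_of_mem_largeStar) hσ hF

lemma empty_mem_mulK_zero (L : Set (Finset ℕ)) : (∅ : Finset ℕ) ∈ MulK θ L 0 :=
  ⟨Fin.elim0, fun i => i.elim0, fun i => i.elim0, fun i => i.elim0⟩

lemma empty_mem_mulK {L : Set (Finset ℕ)} (h : (∅ : Finset ℕ) ∈ L) (k : ℕ) :
    (∅ : Finset ℕ) ∈ MulK θ L k :=
  ⟨fun _ => ∅, fun _ => h, fun _ => subset_rfl, fun _ _ _ =>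
    ⟨fun x hx => absurd hx (Finset.notMem_empty x), fun x hx => by simp [maxN] at hx⟩⟩

lemma empty_mem_mulSeq {L : Set (Finset ℕ)} (h : (∅ : Finset ℕ) ∈ L) :
    ∀ σ : List ℕ, (∅ : Finset ℕ) ∈ MulSeq θ L σ
  | [] => h
  | k :: τ => empty_mem_mulSeq (empty_mem_mulK h k) τ

lemma empty_mem_mulSeq_of_zero_mem {L : Set (Finset ℕ)} {σ : List ℕ} (h : 0 ∈ σ) :
    (∅ : Finset ℕ) ∈ MulSeq θ L σ := by
  induction σ generalizing L with
  | nil => exact absurd h List.not_mem_nil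
  | cons k τ ih =>
    rcases List.mem_cons.mp h with rfl | hτ
    · exact empty_mem_mulSeq (empty_mem_mulK_zero L) τ
    · exact ih hτ

lemma biUnion_mem_mulK {L : Set (Finset ℕ)} {N k : ℕ} {B : Fin N → Finset ℕ}
    (hB : ∀ i j, i < j → SetBelow (B i) (B j) ∧ ThetaApart θ (B i) (B j))
    {g : Fin k → Fin N} (hg : StrictMono g) {Y : Fin k → Finset ℕ} (hYB : ∀ i, Y i ⊆ B (g i))
    (hY : ∀ i, Y i ∈ L) (hYne : ∀ i, (Y i).Nonempty) :
    Finset.univ.biUnion Y ∈ MulK θ L k :=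
  ⟨Y, hY, fun i => Finset.subset_biUnion_of_mem Y (Finset.mem_univ i), fun i j hij =>
    ⟨(hB _ _ (hg hij)).1.mono (hYB i) (hYB j),
      (hB _ _ (hg hij)).2.mono (hYB i) (hYB j) (hYne j)⟩⟩

lemma insert_mem_largeStar_succ {n q b : ℕ} {Y : Finset ℕ} (hqY : ∀ y ∈ Y, q < y) (hqb : q ≤ b)
    (hY : Y ∈ MulSeq θ (LargeStar θ n) (List.replicate (n + 1) b)) :
    insert q Y ∈ LargeStar θ (n + 1) := by
  refine ⟨Finset.insert_nonempty q Y, ?_⟩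
  rw [minN_insert fun y hy => (hqY y hy).le, Finset.erase_insert fun h => lt_irrefl q (hqY q h)]
  exact mulSeq_anti_right (forall₂_replicate hqb _) _ hY

end Products

section Pigeonhole

variable {α : Type*} {θ : ℕ → ℕ → ℕ → Prop}

lemma exists_monochromatic_orderEmbedding {N k : ℕ} {C : Finset α} {c : Fin N → α}
    (hc : ∀ i, c i ∈ C) (hN : C.card * (k - 1) < N) :
    ∃ (g : Fin k ↪o Fin N) (v : α), ∀ i, c (g i) = v := by
  classical
  obtain ⟨v, -, hv⟩ := Finset.exists_lt_card_fiber_of_mul_lt_card_of_maps_to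
    (s := Finset.univ) (fun i _ => hc i) (by simpa using hN)
  obtain ⟨T, hTv, hT⟩ :=
    Finset.exists_subset_card_eq (show k ≤ (Finset.univ.filter fun i => c i = v).card by omega)
  exact ⟨T.orderEmbOfFin hT, v, fun i => (Finset.mem_filter.1 (hTv (T.orderEmbOfFin_mem hT i))).2⟩

/-- The theorem for fixed `n` and `ks`, with colours taken from a palette `C`, so that the
induction on blocks can discard a colour. -/
def Pigeonhole (α : Type*) (θ : ℕ → ℕ → ℕ → Prop) (n : ℕ) (ks : List ℕ) : Prop :=
  ∀ (a : ℕ) (X : Finset ℕ) (C : Finset α) (f : ℕ → α), 0 < minN X → ExpSparse X →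
    X ∈ MulSeq θ (LargeStar θ (n + 1)) (a :: ks.map (a * ·)) → C.card ≤ a → C.card ≤ minN X →
    (∀ x ∈ X, f x ∈ C) → ∃ Y ⊆ X, Y ∈ MulSeq θ (LargeStar θ n) ks ∧ ∀ x ∈ Y, ∀ y ∈ Y, f x = f y

lemma pigeonhole_zero_nil : Pigeonhole α θ 0 [] := fun _ X _ _ hX0 _ _ _ _ _ =>
  ⟨{minN X}, Finset.singleton_subset_iff.2 (minN_mem (nonempty_of_pos_minN hX0)),
    Finset.singleton_nonempty _, by simp⟩

lemma Pigeonhole.concat {n : ℕ} {ks : List ℕ} (h : Pigeonhole α θ n ks) (hks : ∀ k ∈ ks, 0 < k)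
    {k : ℕ} (hk : 0 < k) : Pigeonhole α θ n (ks ++ [k]) := by
  intro a X C f hX0 hsp hX hCa hCX hf
  have ha : 0 < a :=
    (Finset.card_pos.2 ⟨_, hf _ (minN_mem (nonempty_of_pos_minN hX0))⟩).trans_le hCa
  rw [List.map_append, List.map_singleton, ← List.cons_append, mulSeq_concat] at hX
  obtain ⟨B, hBmem, hBX, hBrel⟩ := hX
  have hBne : ∀ i, (B i).Nonempty := fun i => nonempty_of_mem_mulSeq_largeStar
    (by simpa [ha] using fun k hk => Nat.mul_pos ha (hks k hk)) (hBmem i)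
  choose Y hYB hYmem hYhom using fun i => h a (B i) C f
    (hX0.trans_le (minN_mono (hBX i) (hBne i))) (hsp.mono (hBX i)) (hBmem i) hCa
    (hCX.trans (minN_mono (hBX i) (hBne i))) (fun x hx => hf x (hBX i hx))
  have hYne : ∀ i, (Y i).Nonempty := fun i => nonempty_of_mem_mulSeq_largeStar hks (hYmem i)
  have hcard : C.card * (k - 1) < a * k :=
    calc C.card * (k - 1) ≤ a * (k - 1) := Nat.mul_le_mul_right _ hCa
      _ < a * k := Nat.mul_lt_mul_of_pos_left (by omega) ha
  obtain ⟨g, c, hgc⟩ := exists_monochromatic_orderEmbedding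
    (fun i => hf _ (hBX i (hYB i (minN_mem (hYne i))))) hcard
  have hcol : ∀ x ∈ Finset.univ.biUnion (fun i => Y (g i)), f x = c := by
    intro x hx
    obtain ⟨i, -, hxi⟩ := Finset.mem_biUnion.1 hx
    rw [hYhom _ x hxi _ (minN_mem (hYne _)), hgc]
  refine ⟨Finset.univ.biUnion (fun i => Y (g i)), ?_, ?_,
    fun x hx y hy => by rw [hcol x hx, hcol y hy]⟩
  · exact Finset.biUnion_subset.2 fun i _ => (hYB _).trans (hBX _)
  · rw [mulSeq_concat]
    exact biUnion_mem_mulK hBrel g.strictMono (fun i => hYB _) (fun i => hYmem _) (fun i => hYne _)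

lemma Pigeonhole.of_nil {n : ℕ} (h : Pigeonhole α θ n []) {ks : List ℕ} (hks : ∀ k ∈ ks, 0 < k) :
    Pigeonhole α θ n ks := by
  induction ks using List.reverseRecOn with
  | nil => exact h
  | append_singleton ks k ih =>
    have hks' : ∀ k' ∈ ks, 0 < k' := fun k' hk' => hks k' (by simp [hk'])
    exact (ih hks').concat hks' (hks k (by simp))

lemma Pigeonhole.exists_homogeneous_above_minN {n b : ℕ}
    (h : Pigeonhole α θ n (List.replicate (n + 1) b)) (hb : 0 < b) {W : Finset ℕ}
    (hW : W ∈ LargeStar θ (n + 2)) (hsp : ExpSparse W) {C : Finset α} {f : ℕ → α}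
    (hf : ∀ x ∈ W, f x ∈ C) (hCb : C.card * b ≤ minN W) :
    ∃ Y ⊆ W, (∀ y ∈ Y, minN W < y) ∧ Y ∈ MulSeq θ (LargeStar θ n) (List.replicate (n + 1) b) ∧
      ∀ x ∈ Y, ∀ y ∈ Y, f x = f y := by
  obtain ⟨hWne, hWm⟩ := hW
  set m := minN W
  have hC : 0 < C.card := Finset.card_pos.2 ⟨_, hf m (minN_mem hWne)⟩
  have hCm : C.card ≤ m := (Nat.le_mul_of_pos_right _ hb).trans hCb
  have hE : W.erase m ∈ MulSeq θ (LargeStar θ (n + 1))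
      (C.card :: (List.replicate (n + 1) b).map (C.card * ·)) := by
    rw [List.map_replicate]
    exact mulSeq_anti_right (.cons hCm (forall₂_replicate hCb _)) _ hWm
  have hEne : (W.erase m).Nonempty := nonempty_of_mem_mulSeq_largeStar
    (by simpa [List.mem_replicate, hC] using Nat.mul_pos hC hb) hE
  have hmE : m < minN (W.erase m) := minN_lt_of_mem_erase (minN_mem hEne)
  obtain ⟨Y, hYE, hY, hYhom⟩ := h C.card (W.erase m) C f (by omega)
    (hsp.mono (Finset.erase_subset _ _)) hE le_rfl (by omega)
    (fun x hx => hf x (Finset.mem_of_mem_erase hx))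
  exact ⟨Y, hYE.trans (Finset.erase_subset _ _), fun y hy => minN_lt_of_mem_erase (hYE hy), hY,
    hYhom⟩

lemma Pigeonhole.exists_largeStar_of_blocks {n : ℕ}
    (h : ∀ b, 0 < b → Pigeonhole α θ n (List.replicate (n + 1) b)) {X : Finset ℕ}
    (hX0 : 0 < minN X) (hsp : ExpSparse X) {f : ℕ → α} :
    ∀ {j : ℕ} (W : Fin (j + 1) → Finset ℕ) (C : Finset α), (∀ i, W i ∈ LargeStar θ (n + 2)) →
      (∀ i, W i ⊆ X) → (∀ i k, i < k → SetBelow (W i) (W k)) → C.card ≤ j + 1 →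
      C.card ≤ minN X → (∀ i, ∀ x ∈ W i, f x ∈ C) →
      ∃ Y ⊆ X, Y ∈ LargeStar θ (n + 1) ∧ ∀ x ∈ Y, ∀ y ∈ Y, f x = f y
  | 0, W, C, hW, hWX, _, hC1, _, hf => by
    have hmW : minN (W 0) ∈ W 0 := minN_mem (nonempty_of_mem_largeStar (hW 0))
    have hm0 : 0 < minN (W 0) := hX0.trans_le (minN_le (hWX 0 hmW))
    obtain ⟨Y, hYW, hmY, hY, -⟩ := (h _ hm0).exists_homogeneous_above_minN hm0 (hW 0)
      (hsp.mono (hWX 0)) (hf 0) (by simpa using Nat.mul_le_mul_right (minN (W 0)) hC1)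
    have hsub : insert (minN (W 0)) Y ⊆ W 0 := Finset.insert_subset hmW hYW
    exact ⟨_, hsub.trans (hWX 0), insert_mem_largeStar_succ hmY le_rfl hY, fun x hx y hy =>
      Finset.card_le_one.1 hC1 _ (hf 0 x (hsub hx)) _ (hf 0 y (hsub hy))⟩
  | j + 1, W, C, hW, hWX, hbelow, hCj, hCX, hf => by
    classical
    have hWne : ∀ i, (W i).Nonempty := fun i => nonempty_of_mem_largeStar (hW i)
    set prev : Fin (j + 2) := (Fin.last j).castSucc
    set b := maxN (W prev)
    set m := minN (W (Fin.last _))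
    have hbX : b ∈ X := hWX _ (maxN_mem (hWne _))
    have hbm : b < m := hbelow _ _ (Fin.castSucc_lt_last _) b (maxN_mem (hWne _)) m
      (minN_mem (hWne _))
    have hb0 : 0 < b := hX0.trans_le (minN_le hbX)
    have hCb : C.card * b ≤ m :=
      hsp.mul_le hbX (hWX _ (minN_mem (hWne _))) hbm (hCX.trans (minN_le hbX))
    obtain ⟨Y, hYW, hmY, hY, hYhom⟩ := (h b hb0).exists_homogeneous_above_minN hb0 (hW _)
      (hsp.mono (hWX _)) (hf _) hCb
    obtain ⟨y₀, hy₀⟩ := nonempty_of_mem_mulSeq_largeStar (by simpa [List.mem_replicate]) hY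
    by_cases hc : ∃ i : Fin (j + 1), ∃ q ∈ W i.castSucc, f q = f y₀
    · obtain ⟨i, q, hq, hqc⟩ := hc
      have hqb : q ≤ b := by
        rcases (Fin.castSucc_le_castSucc_iff.2 (Fin.le_last i)).lt_or_eq with hlt | heq
        · exact (hbelow _ _ hlt q hq b (maxN_mem (hWne _))).le
        · rw [heq] at hq
          exact le_maxN hq
      have hcol : ∀ x ∈ insert q Y, f x = f y₀ := by
        intro x hx
        rcases Finset.mem_insert.1 hx with rfl | hx
        exacts [hqc, hYhom x hx y₀ hy₀]
      exact ⟨insert q Y, Finset.insert_subset (hWX _ hq) (hYW.trans (hWX _)),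
        insert_mem_largeStar_succ (fun y hy => hqb.trans_lt (hbm.trans (hmY y hy))) hqb hY,
        fun x hx y hy => by rw [hcol x hx, hcol y hy]⟩
    · push Not at hc
      have hc₀ : f y₀ ∈ C := hf _ y₀ (hYW hy₀)
      exact exists_largeStar_of_blocks h hX0 hsp (fun i => W i.castSucc) (C.erase (f y₀))
        (fun i => hW _) (fun i => hWX _)
        (fun i k hik => hbelow _ _ (Fin.castSucc_lt_castSucc_iff.2 hik))
        (by rw [Finset.card_erase_of_mem hc₀]; omega) ((Finset.card_erase_le).trans hCX)
        (fun i x hx => Finset.mem_erase.2 ⟨hc i x hx, hf _ x hx⟩)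

lemma Pigeonhole.succ_nil {n : ℕ} (h : ∀ b, 0 < b → Pigeonhole α θ n (List.replicate (n + 1) b)) :
    Pigeonhole α θ (n + 1) [] := by
  intro a X C f hX0 hsp hX hCa hCX hf
  have hC : 0 < C.card := Finset.card_pos.2 ⟨_, hf _ (minN_mem (nonempty_of_pos_minN hX0))⟩
  obtain ⟨j, rfl⟩ := Nat.exists_eq_succ_of_ne_zero (hC.trans_le hCa).ne'
  obtain ⟨W, hW, hWX, hWrel⟩ := hX
  exact exists_largeStar_of_blocks h hX0 hsp W C hW hWX (fun i k hik => (hWrel i k hik).1) hCa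
    hCX (fun i x hx => hf x (hWX i hx))

theorem pigeonhole : ∀ (n : ℕ) {ks : List ℕ}, (∀ k ∈ ks, 0 < k) → Pigeonhole α θ n ks
  | 0, _, hks => pigeonhole_zero_nil.of_nil hks
  | n + 1, _, hks =>
    (Pigeonhole.succ_nil fun _ hb => pigeonhole n (by simpa [List.mem_replicate])).of_nil hks

end Pigeonhole

/-- pigeonhole principle, general form. -/
theorem stmt_9 (θ : ℕ → ℕ → ℕ → Prop) (n a : ℕ) (ks : List ℕ) (X : Finset ℕ)
    (h3 : 3 ≤ minN X) (ha : a ≤ minN X)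
    (hX : X ∈ MulSeq θ (LargeStar θ (n + 1)) (a :: ks.map (fun k => a * k)))
    (hsp : ExpSparse X)
    (f : ℕ → ℕ) (hf : ∀ x ∈ X, f x < a) :
    ∃ Y ⊆ X, Y ∈ MulSeq θ (LargeStar θ n) ks ∧ ∀ x ∈ Y, ∀ y ∈ Y, f x = f y := by
  by_cases h0 : 0 ∈ ks
  · exact ⟨∅, Finset.empty_subset X, empty_mem_mulSeq_of_zero_mem h0, by simp⟩
  · exact pigeonhole n (fun k hk => Nat.pos_of_ne_zero fun hk0 => h0 (hk0 ▸ hk)) a X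
      (Finset.range a) f (by omega) hsp hX (by simp) (by simpa using ha)
      (fun x hx => Finset.mem_range.2 (hf x hx))
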